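/- Let V be a real inner product space and S, a symmetric positive semidefinite bilinear forms on a subspace W ⊆ V with σ⋆ a(v,v) ≤ S(v,v) ≤ σ⋆⋆ a(v,v) for all v ∈ W, where 0 < σ⋆ ≤ σ⋆⋆. Let Π : V → V be a linear projection (Π∘Π = Π) with range contained in W's complement structure such that a(Πu, Πu) and S((I−Π)u, (I−Π)u) are defined, and define a_h(u,v) = a(Πu, Πv) + S(u − Πu, v − Πv) with a(Πw, (I−Π)w') = 0 for all w, w' (a-orthogonality of the projector). Then min(σ⋆, 1) a(v,v) ≤ a_h(v,v) ≤ max(σ⋆⋆, 1) a(v,v) for all v with (I−Π)v ∈ W. -/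
import Mathlib


/-- VEM stability property: the stabilized bilinear form
`a_h(u,v) = a(Πu,Πv) + S(u−Πu, v−Πv)` satisfies the two-sided bound
`min(σ⋆,1) a(v,v) ≤ a_h(v,v) ≤ max(σ⋆⋆,1) a(v,v)`. -/
theorem vem_stability
    {V : Type*} [NormedAddCommGroup V] [InnerProductSpace ℝ V]
    (a S : V →ₗ[ℝ] V →ₗ[ℝ] ℝ) (W : Submodule ℝ V) (σs σss : ℝ)
    (hσs : 0 < σs) (hσ : σs ≤ σss)
    (haSym : ∀ u v : V, a u v = a v u) (haPsd : ∀ v : V, 0 ≤ a v v)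
    (hSsym : ∀ u v : V, S u v = S v u) (hSpsd : ∀ v : V, 0 ≤ S v v)
    (hsand : ∀ w ∈ W, σs * a w w ≤ S w w ∧ S w w ≤ σss * a w w)
    (Pr : V →ₗ[ℝ] V) (hidem : Pr ∘ₗ Pr = Pr)
    (horth : ∀ u v : V, a (Pr u) (v - Pr v) = 0)
    (a_h : V → V → ℝ)
    (hah : ∀ u v : V, a_h u v = a (Pr u) (Pr v) + S (u - Pr u) (v - Pr v)) :
    ∀ v : V, v - Pr v ∈ W →
      min σs 1 * a v v ≤ a_h v v ∧ a_h v v ≤ max σss 1 * a v v := by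
  intro v hvW
  set p := Pr v with hp
  set w := v - Pr v with hw
  have h1 : a p w = 0 := horth v v
  have h2 : a w p = 0 := by rw [haSym]; exact h1
  have hsplit : a v v = a p p + a w w := by
    have hv : v = p + w := by simp [hp, hw]
    calc a v v = a (p + w) (p + w) := by rw [← hv]
    _ = a p p + a p w + (a w p + a w w) := by simp [map_add]; ring
    _ = a p p + a w w := by rw [h1, h2]; ring
  have hS := hsand w hvW
  have hpp : 0 ≤ a p p := haPsd p
  have hww : 0 ≤ a w w := haPsd w
  have hah' : a_h v v = a p p + S w w := hah v v
  constructor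
  · rw [hah', hsplit]
    have hm1 : min σs 1 ≤ 1 := min_le_right _ _
    have hm2 : min σs 1 ≤ σs := min_le_left _ _
    nlinarith [hS.1]
  · rw [hah', hsplit]
    have hm1 : (1:ℝ) ≤ max σss 1 := le_max_right _ _
    have hm2 : σss ≤ max σss 1 := le_max_left _ _
    nlinarith [hS.2]
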